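/- Let R be a commutative local ring and let M be a finite free R-module equipped with a symplectic form φ. Then there exist a natural number n and a basis e₁, …, e_{2n} of M in which the Gram matrix of φ is the block-diagonal matrix with n diagonal blocks equal to the 2×2 matrix ((0,1),(−1,0)); that is, φ(e_{2i−1}, e_{2i}) = 1 and φ(e_{2i}, e_{2i−1}) = −1 for 1 ≤ i ≤ n, and φ(e_j, e_k) = 0 for all other pairs j ≠ k. -/

import Mathlib

/-! A symplectic form `B` on a nonzero free module is onto the dual, so some coordinate functional
is `B x`, which yields `y` with `B x y = 1`. The plane spanned by `x` and `y` and its orthogonal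
complement split the module, and `B` stays perfect on the complement. That complement is a direct
summand of a finite free module, hence finite projective, hence free because `R` is local; so
induction on the rank splits off one hyperbolic plane at a time. -/

open LinearMap (BilinForm)
open Module Submodule

def stdSymplectic (R : Type*) [Ring R] (j k : ℕ) : R :=
  if j % 2 = 0 ∧ k = j + 1 then 1 else if k % 2 = 0 ∧ j = k + 1 then -1 else 0

section stdSymplectic

variable {R : Type*} [Ring R] {a j k : ℕ}

theorem stdSymplectic_two_mul_add (a j k : ℕ) :
    stdSymplectic R (2 * a + j) (2 * a + k) = stdSymplectic R j k := by
  unfold stdSymplectic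
  split_ifs <;> first | rfl | omega

theorem stdSymplectic_eq_zero_of_lt_of_le (hj : j < 2 * a) (hk : 2 * a ≤ k) :
    stdSymplectic R j k = 0 := by
  unfold stdSymplectic
  split_ifs <;> first | rfl | omega

theorem stdSymplectic_eq_zero_of_le_of_lt (hj : 2 * a ≤ j) (hk : k < 2 * a) :
    stdSymplectic R j k = 0 := by
  unfold stdSymplectic
  split_ifs <;> first | rfl | omega

end stdSymplectic

namespace Submodule

section Ring

variable {R M : Type*} [Ring R] [AddCommGroup M] [Module R M] {P N : Submodule R M}

theorem finite_of_isCompl [Module.Finite R M] (h : IsCompl P N) : Module.Finite R N :=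
  .of_surjective _ (projectionOnto_surjective h.symm)

theorem projective_of_isCompl [Module.Projective R M] (h : IsCompl P N) :
    Module.Projective R N :=
  .of_split N.subtype _ (projectionOnto_comp_subtype h.symm)

theorem finrank_add_finrank_of_isCompl [StrongRankCondition R] [Module.Free R P]
    [Module.Finite R P] [Module.Free R N] [Module.Finite R N] (h : IsCompl P N) :
    finrank R P + finrank R N = finrank R M := by
  rw [← Module.finrank_prod, (prodEquivOfIsCompl P N h).finrank_eq]

end Ring

theorem free_of_isCompl {R M : Type*} [CommRing R] [IsLocalRing R] [AddCommGroup M]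
    [Module R M] [Module.Finite R M] [Module.Projective R M] {P N : Submodule R M}
    (h : IsCompl P N) : Module.Free R N :=
  have := finite_of_isCompl h
  have := projective_of_isCompl h
  Module.free_of_flat_of_isLocalRing

end Submodule

namespace LinearMap.BilinForm

variable {R M : Type*} [CommRing R] [AddCommGroup M] [Module R M] {B : BilinForm R M}

def IsSymplecticBasis (B : BilinForm R M) {n : ℕ} (e : Basis (Fin (2 * n)) R M) : Prop :=
  ∀ j k, B (e j) (e k) = stdSymplectic R j k

theorem exists_apply_eq_one [Module.Free R M] [Nontrivial M] (hB : Function.Surjective B) :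
    ∃ x y, B x y = 1 := by
  let b := Module.Free.chooseBasis R M
  obtain ⟨i⟩ := b.index_nonempty
  obtain ⟨x, hx⟩ := hB (b.coord i)
  exact ⟨x, b i, by simp [hx]⟩

theorem mem_orthogonal_span_pair_iff {x y m : M} :
    m ∈ B.orthogonal (span R {x, y}) ↔ B x m = 0 ∧ B y m = 0 := by
  refine ⟨fun hm => ⟨hm x (subset_span (by simp)), hm y (subset_span (by simp))⟩, ?_⟩
  rintro ⟨hx, hy⟩ n hn
  obtain ⟨a, b, rfl⟩ := mem_span_pair.mp hn
  simp [hx, hy]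

theorem isCompl_span_pair_orthogonal (hB : B.IsAlt) {x y : M} (hxy : B x y = 1) :
    IsCompl (span R {x, y}) (B.orthogonal (span R {x, y})) := by
  have hyx : B y x = -1 := by rw [← hB.neg_eq, hxy]
  constructor
  · rw [disjoint_iff_inf_le]
    rintro m ⟨hmP, hmN⟩
    obtain ⟨a, b, rfl⟩ := mem_span_pair.mp hmP
    rw [SetLike.mem_coe, mem_orthogonal_span_pair_iff] at hmN
    obtain ⟨rfl, rfl⟩ : b = 0 ∧ a = 0 := by simpa [hB.self_eq_zero, hxy, hyx] using hmN
    simp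
  · rw [codisjoint_iff, eq_top_iff]
    intro m _
    rw [← sub_add_cancel m (B x m • y - B y m • x)]
    refine add_mem (mem_sup_right ?_) (mem_sup_left ?_)
    · rw [mem_orthogonal_span_pair_iff]
      simp [hB.self_eq_zero, hxy, hyx]
    · exact sub_mem (smul_mem _ _ (subset_span (by simp))) (smul_mem _ _ (subset_span (by simp)))

theorem exists_isSymplecticBasis_span_pair (hB : B.IsAlt) {x y : M} (hxy : B x y = 1) :
    ∃ e : Basis (Fin (2 * 1)) R (span R {x, y}), (B.restrict _).IsSymplecticBasis e := by
  have hyx : B y x = -1 := by rw [← hB.neg_eq, hxy]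
  have hli : LinearIndependent R ![x, y] := by
    refine LinearIndependent.pair_iff.mpr fun s t hst => ⟨?_, ?_⟩
    · simpa [hB.self_eq_zero, hyx] using congrArg (B y) hst
    · simpa [hB.self_eq_zero, hxy] using congrArg (B x) hst
  let e := (Basis.span hli).map (LinearEquiv.ofEq _ _ (by rw [Matrix.range_cons_cons_empty]))
  refine ⟨e, fun j k => ?_⟩
  fin_cases j <;> fin_cases k <;>
    simp [e, Basis.span_apply, stdSymplectic, hB.self_eq_zero, hxy, hyx]

theorem bijective_restrict_orthogonal (hB : B.IsRefl) (hB' : Function.Bijective B)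
    {P : Submodule R M} (hP : IsCompl P (B.orthogonal P)) :
    Function.Bijective (B.restrict (B.orthogonal P)) := by
  have decomp (m : M) : ∃ p ∈ P, ∃ n ∈ B.orthogonal P, p + n = m :=
    mem_sup.mp (hP.sup_eq_top ▸ mem_top)
  constructor
  · refine (injective_iff_map_eq_zero _).mpr fun a ha => ?_
    have hBa : B a = 0 := by
      ext m
      obtain ⟨p, hp, n, hn, rfl⟩ := decomp m
      have hap : B a p = 0 := hB _ _ (a.2 p hp)
      have han : B a n = 0 := LinearMap.congr_fun ha ⟨n, hn⟩
      simp [hap, han]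
    exact Subtype.ext (hB'.1 (hBa.trans (map_zero B).symm))
  · intro g
    obtain ⟨m, hm⟩ := hB'.2 (LinearMap.ofIsCompl hP 0 g)
    obtain ⟨p, hp, n, hn, rfl⟩ := decomp m
    refine ⟨⟨n, hn⟩, LinearMap.ext fun c => ?_⟩
    have hc := LinearMap.congr_fun hm c
    rw [ofIsCompl_apply_right, map_add, LinearMap.add_apply, c.2 p hp, zero_add] at hc
    exact hc

theorem exists_isSymplecticBasis_of_isCompl {P : Submodule R M}
    (hP : IsCompl P (B.orthogonal P)) (hB : B.IsRefl) {a b : ℕ}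
    (eP : Basis (Fin (2 * a)) R P) (heP : (B.restrict P).IsSymplecticBasis eP)
    (eN : Basis (Fin (2 * b)) R (B.orthogonal P))
    (heN : (B.restrict (B.orthogonal P)).IsSymplecticBasis eN) :
    ∃ e : Basis (Fin (2 * (a + b))) R M, B.IsSymplecticBasis e := by
  let σ : Fin (2 * a) ⊕ Fin (2 * b) ≃ Fin (2 * (a + b)) :=
    finSumFinEquiv.trans (finCongr (mul_add 2 a b).symm)
  let e := ((eP.prod eN).map (prodEquivOfIsCompl _ _ hP)).reindex σ
  have he_inl (i) : e (σ (.inl i)) = eP i := by simp [e]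
  have he_inr (i) : e (σ (.inr i)) = eN i := by simp [e]
  have hσ_inl (i) : (σ (.inl i) : ℕ) = i := rfl
  have hσ_inr (i) : (σ (.inr i) : ℕ) = 2 * a + i := rfl
  have hPN (p : P) (n : B.orthogonal P) : B p n = 0 := n.2 p p.2
  refine ⟨e, ?_⟩
  intro j k
  obtain ⟨j, rfl⟩ := σ.surjective j
  obtain ⟨k, rfl⟩ := σ.surjective k
  rcases j with j | j <;> rcases k with k | k <;>
    simp only [he_inl, he_inr, hσ_inl, hσ_inr]
  · exact heP j k
  · rw [hPN, stdSymplectic_eq_zero_of_lt_of_le j.2 (by omega)]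
  · rw [hB _ _ (hPN _ _), stdSymplectic_eq_zero_of_le_of_lt (by omega) k.2]
  · rw [stdSymplectic_two_mul_add]
    exact heN j k

theorem exists_isSymplecticBasis [IsLocalRing R] [Module.Finite R M] [Module.Free R M]
    (hB : B.IsAlt) (hB' : Function.Bijective B) :
    ∃ (n : ℕ) (e : Basis (Fin (2 * n)) R M), B.IsSymplecticBasis e := by
  induction hr : finrank R M using Nat.strong_induction_on generalizing M with
  | _ r ih =>
  rcases Nat.eq_zero_or_pos r with rfl | hr_pos
  · exact ⟨0, finBasisOfFinrankEq R M hr, fun j => absurd j.2 (by simp)⟩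
  have : Nontrivial M := Module.nontrivial_of_finrank_pos (hr ▸ hr_pos)
  obtain ⟨x, y, hxy⟩ := exists_apply_eq_one hB'.2
  have hP := isCompl_span_pair_orthogonal hB hxy
  obtain ⟨eP, heP⟩ := exists_isSymplecticBasis_span_pair hB hxy
  have := Module.Free.of_basis eP
  have := Module.Finite.of_basis eP
  have := finite_of_isCompl hP
  have := free_of_isCompl hP
  have hrank : finrank R (B.orthogonal (span R {x, y})) < r := by
    have := finrank_add_finrank_of_isCompl hP
    rw [finrank_eq_card_basis eP, Fintype.card_fin] at this
    omega
  obtain ⟨b, eN, heN⟩ := ih _ hrank (B := B.restrict _) (fun n => hB n)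
    (bijective_restrict_orthogonal hB.isRefl hB' hP) rfl
  obtain ⟨e, he⟩ := exists_isSymplecticBasis_of_isCompl hP hB.isRefl eP heP eN heN
  exact ⟨1 + b, e, he⟩

end LinearMap.BilinForm

/-- Over a commutative local ring `R`, every finite free module `M`
equipped with a symplectic form `φ` (an alternating bilinear form inducing an isomorphism
`M ≃ Hom_R(M, R)`) admits a basis `e : Fin (2 * n) → M` in which the Gram matrix of `φ`
is block diagonal with `n` blocks `((0, 1), (-1, 0))`. -/
theorem symplectic_module_over_local_ring_has_standard_basis
    (R : Type*) [CommRing R] [IsLocalRing R]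
    (M : Type*) [AddCommGroup M] [Module R M] [Module.Finite R M] [Module.Free R M]
    (φ : M →ₗ[R] M →ₗ[R] R)
    (halt : ∀ x : M, φ x x = 0)
    (hnondeg : Function.Bijective (φ : M → (M →ₗ[R] R))) :
    ∃ (n : ℕ) (e : Module.Basis (Fin (2 * n)) R M),
      ∀ j k : Fin (2 * n),
        φ (e j) (e k) =
          if (j : ℕ) % 2 = 0 ∧ (k : ℕ) = (j : ℕ) + 1 then (1 : R)
          else if (k : ℕ) % 2 = 0 ∧ (j : ℕ) = (k : ℕ) + 1 then (-1 : R)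
          else 0 :=
  LinearMap.BilinForm.exists_isSymplecticBasis halt hnondeg
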